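/- arXiv:2207.02716 — 3 statements merged into one kernel-verified Lean document; each statement's English description precedes it below -/
import Mathlib

section
/- For each k ≥ 0 and h ≥ 0 define c_{h,k} = ∑_{h_0+⋯+h_k = h} ∏_{j=1}^k 2^{j h_j} (sum over nonnegative integer tuples). Then c_{h,k} ≤ 2^k · 2^{hk}. -/
/-- `c_{h,k} = ∑_{h₀+⋯+h_k = h} ∏_{j=1}^k 2^{j h_j}`, the sum being over nonnegative
integer tuples `(h₀,…,h_k)` with sum `h` (the factor for `j = 0` equals `1`). -/
noncomputable def cCoeff (h k : ℕ) : ℝ :=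
  ∑ t ∈ Finset.Nat.antidiagonalTuple (k + 1) h, ∏ j : Fin (k + 1), (2 : ℝ) ^ ((j : ℕ) * t j)

lemma sum_antidiagonalTuple_succ {M : Type*} [AddCommMonoid M] (n h : ℕ)
    (f : (Fin (n + 1) → ℕ) → M) :
    ∑ t ∈ Finset.Nat.antidiagonalTuple (n + 1) h, f t =
      ∑ ab ∈ Finset.HasAntidiagonal.antidiagonal h, ∑ s ∈ Finset.Nat.antidiagonalTuple n ab.2,
        f (Fin.cons ab.1 s) := by
  rw [Finset.sum_sigma']
  refine (Finset.sum_nbij' (i := fun p => Fin.cons p.1.1 p.2)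
    (j := fun t => ⟨(t 0, ∑ i : Fin n, t i.succ), Fin.tail t⟩) ?_ ?_ ?_ ?_ ?_).symm
  · rintro ⟨⟨a, b⟩, s⟩ hp
    simp only [Finset.mem_sigma, Finset.HasAntidiagonal.mem_antidiagonal,
      Finset.Nat.mem_antidiagonalTuple] at hp ⊢
    rw [Fin.sum_cons, hp.2, hp.1]
  · intro t ht
    simp only [Finset.Nat.mem_antidiagonalTuple, Fin.sum_univ_succ] at ht
    simp only [Finset.mem_sigma, Finset.HasAntidiagonal.mem_antidiagonal,
      Finset.Nat.mem_antidiagonalTuple]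
    exact ⟨ht, rfl⟩
  · rintro ⟨⟨a, b⟩, s⟩ hp
    simp only [Finset.mem_sigma, Finset.HasAntidiagonal.mem_antidiagonal,
      Finset.Nat.mem_antidiagonalTuple] at hp
    simp [Fin.tail_cons, hp.2]
  · intro t ht
    simp [Fin.cons_self_tail]
  · intros; rfl

/-- The same sum with reversed weights `k - j`. -/
noncomputable def gCoeff (k h : ℕ) : ℝ :=
  ∑ t ∈ Finset.Nat.antidiagonalTuple (k + 1) h,
    ∏ j : Fin (k + 1), (2 : ℝ) ^ ((k - (j : ℕ)) * t j)

lemma cCoeff_eq_gCoeff (h k : ℕ) : cCoeff h k = gCoeff k h := by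
  unfold cCoeff gCoeff
  refine Finset.sum_nbij' (i := fun t => t ∘ Fin.rev) (j := fun t => t ∘ Fin.rev)
    ?_ ?_ ?_ ?_ ?_
  · intro t ht
    simp only [Finset.Nat.mem_antidiagonalTuple] at ht ⊢
    rw [← ht]
    exact Equiv.sum_comp Fin.revPerm (fun i => t i)
  · intro t ht
    simp only [Finset.Nat.mem_antidiagonalTuple] at ht ⊢
    rw [← ht]
    exact Equiv.sum_comp Fin.revPerm (fun i => t i)
  · intro t _; ext i; simp [Function.comp, Fin.rev_rev]
  · intro t _; ext i; simp [Function.comp, Fin.rev_rev]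
  · intro t _
    rw [← Equiv.prod_comp Fin.revPerm
      (fun j => (2 : ℝ) ^ ((k - (j : ℕ)) * (t ∘ Fin.rev) j))]
    refine Finset.prod_congr rfl fun j _ => ?_
    simp only [Function.comp, Fin.revPerm_apply, Fin.rev_rev, Fin.val_rev]
    have := j.isLt
    congr 2
    omega

lemma gCoeff_succ (k h : ℕ) :
    gCoeff (k + 1) h = ∑ ab ∈ Finset.HasAntidiagonal.antidiagonal h,
      (2 : ℝ) ^ ((k + 1) * ab.1) * gCoeff k ab.2 := by
  unfold gCoeff
  rw [sum_antidiagonalTuple_succ]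
  refine Finset.sum_congr rfl fun ab _ => ?_
  rw [Finset.mul_sum]
  refine Finset.sum_congr rfl fun s _ => ?_
  rw [Fin.prod_univ_succ]
  simp only [Fin.cons_zero, Fin.cons_succ, Fin.val_zero, Fin.val_succ, Nat.sub_zero]
  congr 1
  refine Finset.prod_congr rfl fun j _ => ?_
  congr 2
  omega

lemma gCoeff_le (k h : ℕ) : gCoeff k h ≤ 2 ^ k * 2 ^ (h * k) := by
  induction k generalizing h with
  | zero =>
    simp only [gCoeff, Finset.Nat.antidiagonalTuple_one, Finset.sum_singleton]
    simp
  | succ k ih =>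
    rw [gCoeff_succ]
    have h1 : ∀ ab ∈ Finset.HasAntidiagonal.antidiagonal h,
        (2 : ℝ) ^ ((k + 1) * ab.1) * gCoeff k ab.2 ≤
          2 ^ k * 2 ^ (h * k) * 2 ^ ab.1 := by
      rintro ⟨a, b⟩ hab
      simp only [Finset.HasAntidiagonal.mem_antidiagonal] at hab
      have := ih b
      calc (2 : ℝ) ^ ((k + 1) * a) * gCoeff k b
          ≤ (2 : ℝ) ^ ((k + 1) * a) * (2 ^ k * 2 ^ (b * k)) := by
            apply mul_le_mul_of_nonneg_left (ih b) (by positivity)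
        _ = 2 ^ k * 2 ^ (h * k) * 2 ^ a := by
            rw [← pow_add, ← pow_add, ← pow_add, ← pow_add]
            congr 1
            subst hab
            ring
    calc (∑ ab ∈ Finset.HasAntidiagonal.antidiagonal h,
          (2 : ℝ) ^ ((k + 1) * ab.1) * gCoeff k ab.2)
        ≤ ∑ ab ∈ Finset.HasAntidiagonal.antidiagonal h, 2 ^ k * 2 ^ (h * k) * 2 ^ ab.1 :=
          Finset.sum_le_sum h1
      _ = 2 ^ k * 2 ^ (h * k) * ∑ a ∈ Finset.range (h + 1), (2 : ℝ) ^ a := by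
          rw [← Finset.mul_sum, Finset.Nat.sum_antidiagonal_eq_sum_range_succ_mk]
      _ ≤ 2 ^ k * 2 ^ (h * k) * 2 ^ (h + 1) := by
          apply mul_le_mul_of_nonneg_left _ (by positivity)
          have := geom_sum_eq (show (2:ℝ) ≠ 1 by norm_num) (h + 1)
          rw [this]
          norm_num
      _ = 2 ^ (k + 1) * 2 ^ (h * (k + 1)) := by
          rw [← pow_add, ← pow_add]
          ring
  
/-- The bound `c_{h,k} ≤ 2^k · 2^{hk}`. -/
theorem cCoeff_le (h k : ℕ) : cCoeff h k ≤ 2 ^ k * 2 ^ (h * k) := by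
  rw [cCoeff_eq_gCoeff]
  exact gCoeff_le k h
end

section
/- Let F : ℝ → ℝ and d ∈ ℕ with d ≥ 1. There exist real coefficients c_{h,d} (0 ≤ h ≤ d), independent of F and k, such that for every k ≥ d and every r, Δ_k(r^d F(r)) = ∑_{h=0}^{d} c_{h,d} r^d Δ_{k-d} F(r/2^h). -/
/-- `Δ_0 F(r) = F(r) - F(r/2)`, `Δ_{k+1} F(r) = Δ_k F(r) - 2^{k+1} Δ_k F(r/2)`. -/
noncomputable def Deltak : ℕ → (ℝ → ℝ) → ℝ → ℝ
  | 0, F => fun r => F r - F (r / 2)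
  | (k + 1), F => fun r => Deltak k F r - 2 ^ (k + 1) * Deltak k F (r / 2)

lemma deltak_ext (k : ℕ) {F G : ℝ → ℝ} (h : ∀ x, F x = G x) (r : ℝ) :
    Deltak k F r = Deltak k G r := by
  rw [funext h]

lemma deltak_mul_id (F : ℝ → ℝ) (n : ℕ) (r : ℝ) :
    Deltak (n + 1) (fun x => x * F x) r
      = r * (Deltak n F r - (1 / 2) * Deltak n F (r / 2)) := by
  induction n generalizing r with
  | zero => simp only [Deltak]; ring
  | succ n ih =>
      show Deltak (n + 1) (fun x => x * F x) r
          - 2 ^ (n + 2) * Deltak (n + 1) (fun x => x * F x) (r / 2) = _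
      rw [ih r, ih (r / 2)]
      show _ = r * ((Deltak n F r - 2 ^ (n + 1) * Deltak n F (r / 2))
          - (1 / 2) * (Deltak n F (r / 2) - 2 ^ (n + 1) * Deltak n F (r / 2 / 2)))
      ring

lemma deltak_pow_aux (d : ℕ) :
    ∃ c : ℕ → ℝ, (∀ h, d < h → c h = 0) ∧ ∀ (F : ℝ → ℝ) (k : ℕ), d ≤ k → ∀ r : ℝ,
      Deltak k (fun x => x ^ d * F x) r
        = ∑ h ∈ Finset.range (d + 1), c h * r ^ d * Deltak (k - d) F (r / 2 ^ h) := by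
  induction d with
  | zero =>
      refine ⟨fun h => if h = 0 then 1 else 0, ?_, ?_⟩
      · intro h hh
        simp [Nat.pos_iff_ne_zero.mp hh]
      · intro F k hk r
        have := deltak_ext k (F := fun x => x ^ 0 * F x) (G := F) (by intro x; ring) r
        simp [this]
  | succ d ih =>
      obtain ⟨c, hc0, hc⟩ := ih
      refine ⟨fun h => c h / 2 ^ h - (if h = 0 then 0 else c (h - 1) / 2 ^ h), ?_, ?_⟩
      · intro h hh
        simp only [hc0 h (by omega), hc0 (h - 1) (by omega), if_neg (by omega : ¬ h = 0)]
        simp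
      · intro F k hk r
        have key : Deltak k (fun x => x ^ (d + 1) * F x) r
            = Deltak k (fun x => x ^ d * (fun y => y * F y) x) r := by
          apply deltak_ext; intro x; ring
        rw [key, hc (fun y => y * F y) k (by omega) r]
        have hkd : k - d = (k - (d + 1)) + 1 := by omega
        set m := k - (d + 1) with hm
        have expand : ∀ h : ℕ, Deltak (k - d) (fun y => y * F y) (r / 2 ^ h)
            = (r / 2 ^ h) * (Deltak m F (r / 2 ^ h)
              - (1 / 2) * Deltak m F (r / 2 ^ (h + 1))) := by
          intro h
          rw [hkd, deltak_mul_id]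
          congr 2
          rw [pow_succ]; ring
        simp only [expand]
        -- split RHS
        have rhsplit : ∀ h ∈ Finset.range (d + 2),
            (c h / 2 ^ h - (if h = 0 then 0 else c (h - 1) / 2 ^ h)) * r ^ (d + 1)
              * Deltak m F (r / 2 ^ h)
            = c h / 2 ^ h * r ^ (d + 1) * Deltak m F (r / 2 ^ h)
              - (if h = 0 then 0
                  else c (h - 1) / 2 ^ h * r ^ (d + 1) * Deltak m F (r / 2 ^ h)) := by
          intro h _
          split <;> ring
        rw [show d + 1 + 1 = d + 2 from rfl, Finset.sum_congr rfl rhsplit,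
          Finset.sum_sub_distrib, Finset.sum_range_succ
            (f := fun h => c h / 2 ^ h * r ^ (d + 1) * Deltak m F (r / 2 ^ h)),
          hc0 (d + 1) (by omega), Finset.sum_range_succ'
            (f := fun h => if h = 0 then 0
              else c (h - 1) / 2 ^ h * r ^ (d + 1) * Deltak m F (r / 2 ^ h))]
        simp only [if_neg (Nat.succ_ne_zero _), Nat.add_sub_cancel, if_pos rfl,
          zero_div, zero_mul, add_zero, sub_zero]
        -- split LHS
        have lhsplit : ∀ h ∈ Finset.range (d + 1),
            c h * r ^ d * ((r / 2 ^ h) * (Deltak m F (r / 2 ^ h)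
              - (1 / 2) * Deltak m F (r / 2 ^ (h + 1))))
            = c h / 2 ^ h * r ^ (d + 1) * Deltak m F (r / 2 ^ h)
              - c h / 2 ^ (h + 1) * r ^ (d + 1) * Deltak m F (r / 2 ^ (h + 1)) := by
          intro h _
          rw [pow_succ r, pow_succ (2 : ℝ)]
          have h2 : (2 : ℝ) ^ h ≠ 0 := by positivity
          field_simp
        rw [Finset.sum_congr rfl lhsplit, Finset.sum_sub_distrib]
        simp

/-- There exist coefficients `c_{h,d}` (`0 ≤ h ≤ d`), independent of `F` and `k`, such that
for every `k ≥ d` and every `r`, `Δ_k(r^d F(r)) = ∑_{h=0}^d c_{h,d} r^d Δ_{k-d} F(r/2^h)`. -/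
theorem deltak_leibniz (d : ℕ) (hd : 1 ≤ d) :
    ∃ c : ℕ → ℝ, ∀ (F : ℝ → ℝ) (k : ℕ), d ≤ k → ∀ r : ℝ,
      Deltak k (fun x => x ^ d * F x) r
        = ∑ h ∈ Finset.range (d + 1), c h * r ^ d * Deltak (k - d) F (r / 2 ^ h) := by
  obtain ⟨c, _, hc⟩ := deltak_pow_aux d
  exact ⟨c, hc⟩
end

section
/- Let ω¹, ω² : [a,b] → ℝ^d be continuous paths, and for i = 1,2 let F_i(t,r,y) = ∫_a^t 𝟙_{[0,r]}(|y - ω^i_s|) ds (the ball function of the occupation measure up to time t). Then for every y ∈ ℝ^d and 1 ≤ p < ∞, ‖ sup_{t∈[a,b]} |F_1(t,·,y) - F_2(t,·,y)| ‖_{L^p(ℝ^+, dr)} ≤ (b-a) ‖ω¹ - ω²‖_∞^{1/p}. -/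
open MeasureTheory Set
open scoped ENNReal

theorem occupation_key (d : ℕ) (a b : ℝ) (hab : a ≤ b)
    (ω₁ ω₂ : ℝ → EuclideanSpace ℝ (Fin d))
    (h₁ : Continuous ω₁) (h₂ : Continuous ω₂)
    (y : EuclideanSpace ℝ (Fin d)) (p : ℝ) (hp : 1 ≤ p) :
    eLpNorm
        (fun r : ℝ => ⨆ t : Set.Icc a b,
          |(∫ s in a..(t : ℝ), if ‖y - ω₁ s‖ ≤ r then (1 : ℝ) else 0) -
            (∫ s in a..(t : ℝ), if ‖y - ω₂ s‖ ≤ r then (1 : ℝ) else 0)|)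
        (ENNReal.ofReal p) (volume.restrict (Set.Ioi (0 : ℝ)))
      ≤ ENNReal.ofReal ((b - a) * (⨆ s : Set.Icc a b, ‖ω₁ s - ω₂ s‖) ^ (1 / p)) := by
  have hpos : 0 < p := lt_of_lt_of_le one_pos hp
  have hne : Nonempty (Icc a b) := Set.nonempty_Icc.mpr hab |>.to_subtype
  set m₁ : ℝ → ℝ := fun s => ‖y - ω₁ s‖ with hm₁def
  set m₂ : ℝ → ℝ := fun s => ‖y - ω₂ s‖ with hm₂def
  have hcm₁ : Continuous m₁ := (continuous_const.sub h₁).norm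
  have hcm₂ : Continuous m₂ := (continuous_const.sub h₂).norm
  set I : (ℝ → ℝ) → ℝ → ℝ → ℝ := fun m s r => if m s ≤ r then 1 else 0 with hIdef
  -- measurability
  have hmeasI : ∀ m : ℝ → ℝ, Continuous m → ∀ r, Measurable (fun s => I m s r) := by
    intro m hm r
    exact Measurable.ite (measurableSet_le hm.measurable measurable_const)
      measurable_const measurable_const
  -- interval integrability
  have hII : ∀ (m : ℝ → ℝ), Continuous m → ∀ (r c t : ℝ),
      IntervalIntegrable (fun s => I m s r) volume c t := by
    intro m hm r c t
    rw [intervalIntegrable_iff]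
    apply Integrable.mono' ((integrableOn_const_iff (C := (1:ℝ))).mpr
      (Or.inr (by rw [Set.uIoc]; exact measure_Ioc_lt_top)))
      ((hmeasI m hm r).aestronglyMeasurable)
    filter_upwards with s
    simp only [hIdef]
    split <;> simp
  -- the dominating function G
  set G : ℝ → ℝ := fun r => ∫ s in a..b, |I m₁ s r - I m₂ s r| with hGdef
  have hIIabs : ∀ (r c t : ℝ),
      IntervalIntegrable (fun s => |I m₁ s r - I m₂ s r|) volume c t := by
    intro r c t
    exact ((hII m₁ hcm₁ r c t).sub (hII m₂ hcm₂ r c t)).abs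
  set f : ℝ → ℝ := fun r => ⨆ t : Set.Icc a b,
          |(∫ s in a..(t : ℝ), I m₁ s r) - (∫ s in a..(t : ℝ), I m₂ s r)| with hfdef
  have hf_nonneg : ∀ r, 0 ≤ f r := fun r => Real.iSup_nonneg fun t => abs_nonneg _
  have hfG : ∀ r, f r ≤ G r := by
    intro r
    apply ciSup_le
    intro t
    rw [← intervalIntegral.integral_sub (hII m₁ hcm₁ r a t) (hII m₂ hcm₂ r a t)]
    calc |∫ s in a..(t : ℝ), (I m₁ s r - I m₂ s r)|
        ≤ ∫ s in a..(t : ℝ), |I m₁ s r - I m₂ s r| :=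
          intervalIntegral.abs_integral_le_integral_abs t.2.1
      _ ≤ G r := by
          apply intervalIntegral.integral_mono_interval le_rfl t.2.1 t.2.2
          · filter_upwards with s using abs_nonneg _
          · exact hIIabs r a b
  have hGba : ∀ r, G r ≤ b - a := by
    intro r
    calc G r ≤ ∫ _ in a..b, (1 : ℝ) := by
          apply intervalIntegral.integral_mono_on hab (hIIabs r a b)
            intervalIntegrable_const
          intro s _
          have h1 : I m₁ s r = 0 ∨ I m₁ s r = 1 := by
            simp only [hIdef]; split <;> simp
          have h2 : I m₂ s r = 0 ∨ I m₂ s r = 1 := by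
            simp only [hIdef]; split <;> simp
          rcases h1 with h1 | h1 <;> rcases h2 with h2 | h2 <;>
            rw [h1, h2] <;> norm_num
      _ = b - a := by simp
  have hG_nonneg : ∀ r, 0 ≤ G r :=
    fun r => intervalIntegral.integral_nonneg hab fun s _ => abs_nonneg _
  -- the sup δ
  set δ : ℝ := ⨆ s : Set.Icc a b, ‖ω₁ s - ω₂ s‖ with hδdef
  have hbddδ : BddAbove (Set.range fun s : Icc a b => ‖ω₁ s - ω₂ s‖) := by
    have := (isCompact_Icc (a := a) (b := b)).bddAbove_image
      (f := fun s => ‖ω₁ s - ω₂ s‖) ((h₁.sub h₂).norm.continuousOn)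
    rwa [Set.image_eq_range] at this
  have hδ_nonneg : 0 ≤ δ := Real.iSup_nonneg fun s => norm_nonneg _
  -- inner bound: for s ∈ Icc a b, lintegral over r of the indicator difference
  have hinner : ∀ s ∈ Icc a b,
      (∫⁻ r in Ioi (0 : ℝ), ENNReal.ofReal |I m₁ s r - I m₂ s r|) ≤ ENNReal.ofReal δ := by
    intro s hs
    set mn := min (m₁ s) (m₂ s)
    set mx := max (m₁ s) (m₂ s)
    have hptwise : ∀ r : ℝ, ENNReal.ofReal |I m₁ s r - I m₂ s r|
        ≤ (Ico mn mx).indicator (fun _ => (1 : ℝ≥0∞)) r := by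
      intro r
      by_cases hr : r ∈ Ico mn mx
      · rw [Set.indicator_of_mem hr]
        have h1 : |I m₁ s r - I m₂ s r| ≤ 1 := by
          simp only [hIdef]; split <;> split <;> norm_num
        calc ENNReal.ofReal |I m₁ s r - I m₂ s r| ≤ ENNReal.ofReal 1 :=
              ENNReal.ofReal_le_ofReal h1
          _ = 1 := ENNReal.ofReal_one
      · rw [Set.indicator_of_notMem hr]
        rw [Set.mem_Ico, not_and_or, not_le, not_lt] at hr
        have : I m₁ s r = I m₂ s r := by
          rcases hr with hr | hr
          · have n1 : ¬ m₁ s ≤ r := fun h => absurd (le_trans (min_le_left _ _) h)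
              (not_le.mpr hr)
            have n2 : ¬ m₂ s ≤ r := fun h => absurd (le_trans (min_le_right _ _) h)
              (not_le.mpr hr)
            simp only [hIdef, if_neg n1, if_neg n2]
          · have n1 : m₁ s ≤ r := le_trans (le_max_left _ _) hr
            have n2 : m₂ s ≤ r := le_trans (le_max_right _ _) hr
            simp only [hIdef, if_pos n1, if_pos n2]
        simp [this]
    calc (∫⁻ r in Ioi (0 : ℝ), ENNReal.ofReal |I m₁ s r - I m₂ s r|)
        ≤ ∫⁻ r in Ioi (0 : ℝ), (Ico mn mx).indicator (fun _ => (1 : ℝ≥0∞)) r :=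
          lintegral_mono fun r => hptwise r
      _ ≤ ∫⁻ r, (Ico mn mx).indicator (fun _ => (1 : ℝ≥0∞)) r :=
          setLIntegral_le_lintegral _ _
      _ = volume (Ico mn mx) := by
          rw [lintegral_indicator measurableSet_Ico]; simp
      _ = ENNReal.ofReal (mx - mn) := by rw [Real.volume_Ico]
      _ ≤ ENNReal.ofReal δ := by
          apply ENNReal.ofReal_le_ofReal
          have h1 : mx - mn = |m₁ s - m₂ s| :=
            (max_sub_min_eq_abs _ _).trans (abs_sub_comm _ _)
          have h2 : |m₁ s - m₂ s| ≤ ‖ω₁ s - ω₂ s‖ := by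
            have := abs_norm_sub_norm_le (y - ω₁ s) (y - ω₂ s)
            simpa [norm_sub_rev, sub_sub_sub_cancel_left] using this
          have h3 : ‖ω₁ s - ω₂ s‖ ≤ δ := le_ciSup hbddδ (⟨s, hs⟩ : Icc a b)
          linarith
  -- joint measurability for Fubini
  have hjm : Measurable (fun q : ℝ × ℝ => ENNReal.ofReal |I m₁ q.2 q.1 - I m₂ q.2 q.1|) := by
    apply ENNReal.measurable_ofReal.comp
    apply Measurable.abs
    apply Measurable.sub
    · exact Measurable.ite
        (measurableSet_le (hcm₁.comp continuous_snd).measurable measurable_fst)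
        measurable_const measurable_const
    · exact Measurable.ite
        (measurableSet_le (hcm₂.comp continuous_snd).measurable measurable_fst)
        measurable_const measurable_const
  -- the integral of G
  have hGint : (∫⁻ r in Ioi (0 : ℝ), ENNReal.ofReal (G r))
      ≤ ENNReal.ofReal (b - a) * ENNReal.ofReal δ := by
    have hGrepr : ∀ r, ENNReal.ofReal (G r)
        = ∫⁻ s in Ioc a b, ENNReal.ofReal |I m₁ s r - I m₂ s r| := by
      intro r
      show ENNReal.ofReal (∫ s in a..b, |I m₁ s r - I m₂ s r|) = _
      rw [intervalIntegral.integral_of_le hab]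
      apply ofReal_integral_eq_lintegral_ofReal
      · exact (hIIabs r a b).1
      · filter_upwards with s using abs_nonneg _
    calc (∫⁻ r in Ioi (0 : ℝ), ENNReal.ofReal (G r))
        = ∫⁻ r in Ioi (0 : ℝ), ∫⁻ s in Ioc a b, ENNReal.ofReal |I m₁ s r - I m₂ s r| := by
          simp_rw [hGrepr]
      _ = ∫⁻ s in Ioc a b, ∫⁻ r in Ioi (0 : ℝ), ENNReal.ofReal |I m₁ s r - I m₂ s r| :=
          lintegral_lintegral_swap hjm.aemeasurable
      _ ≤ ∫⁻ _ in Ioc a b, ENNReal.ofReal δ :=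
          setLIntegral_mono measurable_const fun s hs => hinner s (Ioc_subset_Icc_self hs)
      _ = ENNReal.ofReal δ * volume (Ioc a b) := by rw [setLIntegral_const]
      _ = ENNReal.ofReal (b - a) * ENNReal.ofReal δ := by
          rw [Real.volume_Ioc, mul_comm]
  -- main lintegral bound
  have hmain : (∫⁻ r in Ioi (0 : ℝ), ENNReal.ofReal (f r) ^ p)
      ≤ ENNReal.ofReal (b - a) ^ p * ENNReal.ofReal δ := by
    have step : (∫⁻ r in Ioi (0 : ℝ), ENNReal.ofReal (f r) ^ p)
        ≤ ∫⁻ r in Ioi (0 : ℝ), ENNReal.ofReal (b - a) ^ (p - 1) * ENNReal.ofReal (G r) := by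
      apply lintegral_mono
      intro r
      dsimp only
      by_cases hfr : ENNReal.ofReal (f r) = 0
      · rw [hfr, ENNReal.zero_rpow_of_pos hpos]
        exact zero_le
      · calc ENNReal.ofReal (f r) ^ p
            = ENNReal.ofReal (f r) ^ (p - 1) * ENNReal.ofReal (f r) ^ (1 : ℝ) := by
              rw [← ENNReal.rpow_add _ _ hfr ENNReal.ofReal_ne_top]; norm_num
          _ ≤ ENNReal.ofReal (b - a) ^ (p - 1) * ENNReal.ofReal (G r) := by
              apply mul_le_mul'
              · apply ENNReal.rpow_le_rpow _ (by linarith)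
                exact ENNReal.ofReal_le_ofReal (le_trans (hfG r) (hGba r))
              · rw [ENNReal.rpow_one]
                exact ENNReal.ofReal_le_ofReal (hfG r)
    rw [lintegral_const_mul' _ _ (by
      exact ENNReal.rpow_ne_top_of_nonneg (by linarith) ENNReal.ofReal_ne_top)] at step
    calc (∫⁻ r in Ioi (0 : ℝ), ENNReal.ofReal (f r) ^ p)
        ≤ ENNReal.ofReal (b - a) ^ (p - 1) * (∫⁻ r in Ioi (0 : ℝ), ENNReal.ofReal (G r)) :=
          step
      _ ≤ ENNReal.ofReal (b - a) ^ (p - 1) * (ENNReal.ofReal (b - a) * ENNReal.ofReal δ) :=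
          mul_le_mul' le_rfl hGint
      _ = ENNReal.ofReal (b - a) ^ p * ENNReal.ofReal δ := by
          by_cases hba : ENNReal.ofReal (b - a) = 0
          · rcases eq_or_lt_of_le hp with hp1 | hp1
            · rw [← hp1]; norm_num
            · rw [hba, ENNReal.zero_rpow_of_pos (by linarith),
                ENNReal.zero_rpow_of_pos hpos]
              simp
          · have hkey : ENNReal.ofReal (b - a) ^ (p - 1) * ENNReal.ofReal (b - a) ^ (1 : ℝ)
                = ENNReal.ofReal (b - a) ^ p := by
              rw [← ENNReal.rpow_add _ _ hba ENNReal.ofReal_ne_top]; norm_num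
            rw [← hkey, ENNReal.rpow_one, mul_assoc]
  -- finish
  rw [eLpNorm_eq_lintegral_rpow_enorm_toReal
    (by simp only [ne_eq, ENNReal.ofReal_eq_zero, not_le]; exact hpos)
    ENNReal.ofReal_ne_top]
  rw [ENNReal.toReal_ofReal hpos.le]
  have hfe : ∀ r : ℝ, ((‖f r‖ₑ : ℝ≥0∞)) = ENNReal.ofReal (f r) := fun r =>
    Real.enorm_eq_ofReal (hf_nonneg r)
  calc (∫⁻ r in Ioi (0:ℝ), (‖f r‖ₑ : ℝ≥0∞) ^ p) ^ (1 / p)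
      = (∫⁻ r in Ioi (0:ℝ), ENNReal.ofReal (f r) ^ p) ^ (1 / p) := by
        simp_rw [hfe]
    _ ≤ (ENNReal.ofReal (b - a) ^ p * ENNReal.ofReal δ) ^ (1 / p) :=
        ENNReal.rpow_le_rpow hmain (by positivity)
    _ = ENNReal.ofReal (b - a) * ENNReal.ofReal δ ^ (1 / p) := by
        rw [ENNReal.mul_rpow_of_nonneg _ _ (by positivity), ← ENNReal.rpow_mul,
          mul_one_div, div_self hpos.ne', ENNReal.rpow_one]
    _ = ENNReal.ofReal ((b - a) * δ ^ (1 / p)) := by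
        rw [ENNReal.ofReal_rpow_of_nonneg hδ_nonneg (by positivity),
          ← ENNReal.ofReal_mul (by linarith)]

/-- For continuous paths `ω¹, ω² : [a,b] → ℝ^d`, with
`F_i(t,r,y) = ∫_a^t 𝟙_{[0,r]}(|y - ωⁱ_s|) ds`, one has, for every `y` and `1 ≤ p < ∞`,
`‖sup_t |F₁(t,·,y) - F₂(t,·,y)|‖_{L^p(ℝ⁺,dr)} ≤ (b-a) ‖ω¹ - ω²‖_∞^{1/p}`. -/
theorem occupation_ballFunction_continuity (d : ℕ) (a b : ℝ) (hab : a ≤ b)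
    (ω₁ ω₂ : ℝ → EuclideanSpace ℝ (Fin d))
    (h₁ : ContinuousOn ω₁ (Set.Icc a b)) (h₂ : ContinuousOn ω₂ (Set.Icc a b))
    (y : EuclideanSpace ℝ (Fin d)) (p : ℝ) (hp : 1 ≤ p) :
    eLpNorm
        (fun r : ℝ => ⨆ t : Set.Icc a b,
          |(∫ s in a..(t : ℝ), if ‖y - ω₁ s‖ ≤ r then (1 : ℝ) else 0) -
            (∫ s in a..(t : ℝ), if ‖y - ω₂ s‖ ≤ r then (1 : ℝ) else 0)|)
        (ENNReal.ofReal p) (volume.restrict (Set.Ioi (0 : ℝ)))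
      ≤ ENNReal.ofReal ((b - a) * (⨆ s : Set.Icc a b, ‖ω₁ s - ω₂ s‖) ^ (1 / p)) := by
  set ω₁' : ℝ → EuclideanSpace ℝ (Fin d) := fun s => ω₁ (projIcc a b hab s) with hω₁'
  set ω₂' : ℝ → EuclideanSpace ℝ (Fin d) := fun s => ω₂ (projIcc a b hab s) with hω₂'
  have hc : Continuous (fun s : ℝ => ((projIcc a b hab s : Icc a b) : ℝ)) :=
    continuous_subtype_val.comp continuous_projIcc
  have hc₁ : Continuous ω₁' :=
    h₁.comp_continuous hc fun x => (projIcc a b hab x).2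
  have hc₂ : Continuous ω₂' :=
    h₂.comp_continuous hc fun x => (projIcc a b hab x).2
  have heq : ∀ s ∈ Icc a b, ω₁' s = ω₁ s ∧ ω₂' s = ω₂ s := by
    intro s hs
    constructor <;> simp only [hω₁', hω₂', projIcc_of_mem hab hs]
  have key := occupation_key d a b hab ω₁' ω₂' hc₁ hc₂ y p hp
  have hLHS : (fun r : ℝ => ⨆ t : Set.Icc a b,
          |(∫ s in a..(t : ℝ), if ‖y - ω₁ s‖ ≤ r then (1 : ℝ) else 0) -
            (∫ s in a..(t : ℝ), if ‖y - ω₂ s‖ ≤ r then (1 : ℝ) else 0)|)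
      = (fun r : ℝ => ⨆ t : Set.Icc a b,
          |(∫ s in a..(t : ℝ), if ‖y - ω₁' s‖ ≤ r then (1 : ℝ) else 0) -
            (∫ s in a..(t : ℝ), if ‖y - ω₂' s‖ ≤ r then (1 : ℝ) else 0)|) := by
    funext r
    apply iSup_congr
    intro t
    have hsub : uIcc a (t : ℝ) ⊆ Icc a b := by
      rw [Set.uIcc_of_le t.2.1]
      exact Icc_subset_Icc le_rfl t.2.2
    have e1 : (∫ s in a..(t : ℝ), if ‖y - ω₁ s‖ ≤ r then (1:ℝ) else 0)
        = ∫ s in a..(t : ℝ), if ‖y - ω₁' s‖ ≤ r then (1:ℝ) else 0 :=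
      intervalIntegral.integral_congr fun s hs => by
        rw [(heq s (hsub hs)).1]
    have e2 : (∫ s in a..(t : ℝ), if ‖y - ω₂ s‖ ≤ r then (1:ℝ) else 0)
        = ∫ s in a..(t : ℝ), if ‖y - ω₂' s‖ ≤ r then (1:ℝ) else 0 :=
      intervalIntegral.integral_congr fun s hs => by
        rw [(heq s (hsub hs)).2]
    rw [e1, e2]
  have hRHS : (⨆ s : Set.Icc a b, ‖ω₁ s - ω₂ s‖) = ⨆ s : Set.Icc a b, ‖ω₁' s - ω₂' s‖ := by
    apply iSup_congr
    intro s
    rw [(heq s s.2).1, (heq s s.2).2]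
  rw [hLHS, hRHS]
  exact key
end
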